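/- Let a compact metric group G act continuously on a metric space X and let x ∈ X. Then for all κ₁, κ₂ > 0, Sep(ν_{G,x}; κ₁, κ₂) ≤ ω_x(+Sep(G; κ₁, κ₂)). -/

import Mathlib

open MeasureTheory Metric Set Filter Topology ENNReal

noncomputable section

/-- The extended distance `d(A,B)` between two subsets of an (extended) metric space. -/
def setEDist {X : Type*} [PseudoEMetricSpace X] (A B : Set X) : ℝ≥0∞ :=
  ⨅ (x ∈ A) (y ∈ B), edist x y

/-- The partial diameter `diam(ν, ν(X) − κ)`: the infimum of the diameters of Borel
subsets of measure at least `ν(X) − κ`. -/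
def partialDiam {X : Type*} [PseudoEMetricSpace X] [MeasurableSpace X]
    (ν : Measure X) (κ : ℝ≥0∞) : ℝ≥0∞ :=
  ⨅ (A : Set X) (_ : MeasurableSet A) (_ : ν univ - κ ≤ ν A), EMetric.diam A

/-- The separation distance `Sep(ν; κ₁, κ₂)`: the supremum of `d(A,B)` over Borel sets
`A, B` with `ν(A) ≥ κ₁` and `ν(B) ≥ κ₂`. -/
def sepDist {X : Type*} [PseudoEMetricSpace X] [MeasurableSpace X]
    (ν : Measure X) (κ₁ κ₂ : ℝ≥0∞) : ℝ≥0∞ :=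
  ⨆ (A : Set X) (B : Set X) (_ : MeasurableSet A) (_ : MeasurableSet B)
    (_ : κ₁ ≤ ν A) (_ : κ₂ ≤ ν B), setEDist A B

/-- The observable diameter `ObsDiam_Y(X; −κ)`. -/
def obsDiam (Y : Type*) [PseudoEMetricSpace Y] [MeasurableSpace Y]
    {X : Type*} [PseudoEMetricSpace X] [MeasurableSpace X]
    (μ : Measure X) (κ : ℝ≥0∞) : ℝ≥0∞ :=
  ⨆ (f : X → Y) (_ : LipschitzWith 1 f), partialDiam (Measure.map f μ) κ

/-- A sequence of mm-spaces is a Lévy family if its observable diameters (viewed in `ℝ`)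
tend to zero for every `κ > 0`. -/
def IsLevyFamily (X : ℕ → Type*) [∀ n, PseudoEMetricSpace (X n)]
    [∀ n, MeasurableSpace (X n)] (μ : ∀ n, Measure (X n)) : Prop :=
  ∀ κ : ℝ≥0∞, 0 < κ → Tendsto (fun n => obsDiam ℝ (μ n) κ) atTop (nhds 0)

/-- `ρ(η)` for an action of `G` on `X`: the supremum of `d(gx, gy)` over `g ∈ G` and
`x, y ∈ X` with `d(x,y) ≤ η`. -/
def actRho (G X : Type*) [SMul G X] [PseudoEMetricSpace X] (η : ℝ≥0∞) : ℝ≥0∞ :=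
  ⨆ (g : G) (x : X) (y : X) (_ : edist x y ≤ η), edist (g • x) (g • y)

/-- `ρ(+η) = lim_{η' ↓ η} ρ(η')`. -/
def actRhoPlus (G X : Type*) [SMul G X] [PseudoEMetricSpace X] (η : ℝ≥0∞) : ℝ≥0∞ :=
  ⨅ (η' : ℝ≥0∞) (_ : η < η'), actRho G X η'

/-- `ω_x(η)`: the supremum of `d(gx, g'x)` over `g, g' ∈ G` with `d_G(g,g') ≤ η`. -/
def actOmega (G : Type*) {X : Type*} [PseudoEMetricSpace G] [SMul G X]
    [PseudoEMetricSpace X] (x : X) (η : ℝ≥0∞) : ℝ≥0∞ :=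
  ⨆ (g : G) (g' : G) (_ : edist g g' ≤ η), edist (g • x) (g' • x)

/-- `ω_x(+η) = lim_{η' ↓ η} ω_x(η')`. -/
def actOmegaPlus (G : Type*) {X : Type*} [PseudoEMetricSpace G] [SMul G X]
    [PseudoEMetricSpace X] (x : X) (η : ℝ≥0∞) : ℝ≥0∞ :=
  ⨅ (η' : ℝ≥0∞) (_ : η < η'), actOmega G x η'

section SetEDist

variable {α : Type*} [PseudoEMetricSpace α] {A B : Set α} {a b : α}

theorem setEDist_le_edist (ha : a ∈ A) (hb : b ∈ B) : setEDist A B ≤ edist a b :=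
  iInf₂_le_of_le a ha <| iInf₂_le b hb

theorem exists_edist_lt_of_setEDist_lt {r : ℝ≥0∞} (h : setEDist A B < r) :
    ∃ a ∈ A, ∃ b ∈ B, edist a b < r := by
  simpa only [setEDist, iInf_lt_iff, exists_prop] using h

theorem setEDist_le_sepDist [MeasurableSpace α] {ν : Measure α} {κ₁ κ₂ : ℝ≥0∞}
    (hA : MeasurableSet A) (hB : MeasurableSet B) (hκA : κ₁ ≤ ν A) (hκB : κ₂ ≤ ν B) :
    setEDist A B ≤ sepDist ν κ₁ κ₂ :=
  le_iSup₂_of_le A B <| le_iSup₂_of_le hA hB <| le_iSup₂_of_le hκA hκB le_rfl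

end SetEDist

/-- The preimages of `A` and `B` have the same measures, hence come within `η` of each other,
and their images witness that `A` and `B` are within the modulus of continuity of `f` at `η`. -/
theorem sepDist_map_le_of_sepDist_lt {α β : Type*} [PseudoEMetricSpace α] [MeasurableSpace α]
    [PseudoEMetricSpace β] [MeasurableSpace β] {μ : Measure α} {f : α → β}
    (hf : Measurable f) {κ₁ κ₂ η : ℝ≥0∞} (hη : sepDist μ κ₁ κ₂ < η) :
    sepDist (μ.map f) κ₁ κ₂ ≤ ⨆ (a : α) (b : α) (_ : edist a b ≤ η), edist (f a) (f b) := by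
  refine iSup₂_le fun A B => iSup₂_le fun hA hB => iSup₂_le fun hκA hκB => ?_
  rw [Measure.map_apply hf hA] at hκA
  rw [Measure.map_apply hf hB] at hκB
  obtain ⟨a, ha, b, hb, hab⟩ := exists_edist_lt_of_setEDist_lt <|
    (setEDist_le_sepDist (hf hA) (hf hB) hκA hκB).trans_lt hη
  calc setEDist A B ≤ edist (f a) (f b) := setEDist_le_edist ha hb
    _ ≤ ⨆ (a : α) (b : α) (_ : edist a b ≤ η), edist (f a) (f b) :=
      le_iSup₂_of_le a b <| le_iSup_of_le hab.le le_rfl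

theorem stmt_8_general {G : Type*} [Group G] [MetricSpace G]
    [MeasurableSpace G] [BorelSpace G]
    {X : Type*} [MetricSpace X] [MeasurableSpace X] [BorelSpace X]
    [MulAction G X] [ContinuousSMul G X]
    (μG : Measure G)
    (x : X) (κ₁ κ₂ : ℝ≥0∞) :
    sepDist (Measure.map (· • x) μG) κ₁ κ₂ ≤ actOmegaPlus G x (sepDist μG κ₁ κ₂) :=
  le_iInf₂ fun _ hη =>
    sepDist_map_le_of_sepDist_lt (continuous_id.smul continuous_const).measurable hη

theorem stmt_8 {G : Type*} [Group G] [MetricSpace G] [CompactSpace G] [IsTopologicalGroup G]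
    [MeasurableSpace G] [BorelSpace G]
    {X : Type*} [MetricSpace X] [MeasurableSpace X] [BorelSpace X]
    [MulAction G X] [ContinuousSMul G X]
    (μG : Measure G) [μG.IsHaarMeasure] [IsProbabilityMeasure μG]
    (x : X) (κ₁ κ₂ : ℝ≥0∞) (hκ₁ : 0 < κ₁) (hκ₂ : 0 < κ₂) :
    sepDist (Measure.map (· • x) μG) κ₁ κ₂ ≤ actOmegaPlus G x (sepDist μG κ₁ κ₂) :=
  stmt_8_general μG x κ₁ κ₂
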